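/- arXiv:2406.18000 — 7 statements merged into one kernel-verified Lean document; each statement's English description precedes it below -/
import Mathlib

section
/- Let λ ∈ (0, 1/2), μ = 1 - λ, γ ∈ (0, 1), C_c ∈ ℝ, and let φ = (1 - √(1 - 4λμγ²)) / (2λγ). If f : ℕ → ℝ is bounded, f(0) = C_c, and f(h) = γ(λ f(h+1) + μ f(h-1)) for all h ≥ 1, then f(h) = φ^h · C_c for all h ∈ ℕ. -/
/-- If `f : ℕ → ℝ` is bounded, `f 0 = Cc`, and
`f h = gam*(lam*f(h+1) + mu*f(h-1))` for all `h ≥ 1`, then `f h = phi^h * Cc`. -/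
theorem stmt_2 (lam mu gam Cc phi : ℝ)
    (hlam0 : 0 < lam) (hlam : lam < 1/2) (hmu : mu = 1 - lam)
    (hgam0 : 0 < gam) (hgam1 : gam < 1)
    (hphi : phi = (1 - Real.sqrt (1 - 4*lam*mu*gam^2)) / (2*lam*gam))
    (f : ℕ → ℝ) (hbdd : ∃ M : ℝ, ∀ h : ℕ, |f h| ≤ M)
    (hf0 : f 0 = Cc)
    (hrec : ∀ h : ℕ, 1 ≤ h → f h = gam * (lam * f (h+1) + mu * f (h-1))) :
    ∀ h : ℕ, f h = phi ^ h * Cc := by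
  obtain ⟨M, hM⟩ := hbdd
  subst hmu
  set s := Real.sqrt (1 - 4*lam*(1-lam)*gam^2) with hs
  clear_value s
  have hgam2 : gam^2 < 1 := by nlinarith
  have hD0 : 0 < 1 - 4*lam*(1-lam)*gam^2 := by
    nlinarith [mul_nonneg (sq_nonneg (1-2*lam)) (sq_nonneg gam)]
  have hs0 : 0 ≤ s := by rw [hs]; exact Real.sqrt_nonneg _
  have hs2 : s^2 = 1 - 4*lam*(1-lam)*gam^2 := by rw [hs]; exact Real.sq_sqrt hD0.le
  have hX : 0 < 4*lam*(1-lam)*gam^2 :=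
    mul_pos (mul_pos (by linarith) (by linarith)) (pow_pos hgam0 2)
  have hs1 : s < 1 := lt_of_pow_lt_pow_left₀ 2 zero_le_one (by nlinarith)
  have hlg : (0:ℝ) < 2*lam*gam := by positivity
  have hlg1 : 2*lam*gam < 1 := by nlinarith
  have hlgne : 2*lam*gam ≠ 0 := ne_of_gt hlg
  have hphi0 : 0 < phi := by
    rw [hphi]; apply div_pos _ hlg; linarith
  have hphi1 : phi < 1 := by
    rw [hphi, div_lt_one hlg]; nlinarith
  have hchar : lam*gam*phi^2 - phi + (1-lam)*gam = 0 := by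
    rw [hphi]; field_simp; nlinarith [hs2]
  set psi : ℝ := (1+s)/(2*lam*gam) with hpsi
  clear_value psi
  have hpsi1 : 1 < psi := by
    rw [hpsi, lt_div_iff₀ hlg]; nlinarith
  have hsum' : lam*gam*(phi+psi) = 1 := by
    rw [hphi, hpsi]; field_simp; ring
  have hprod' : lam*gam*(phi*psi) = (1-lam)*gam := by
    rw [hphi, hpsi]; field_simp; nlinarith [hs2]
  set g : ℕ → ℝ := fun n => f n - phi^n * Cc with hg
  clear_value g
  have hg0 : g 0 = 0 := by simp [hg, hf0]
  have grec : ∀ n : ℕ, lam*gam*(g (n+2)) = g (n+1) - (1-lam)*gam * g n := by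
    intro n
    have h := hrec (n+1) (by omega)
    simp only [Nat.add_sub_cancel] at h
    simp only [hg]
    linear_combination (-1 : ℝ) * h - (Cc * phi^n) * hchar
  set e : ℕ → ℝ := fun n => g (n+1) - phi * g n with he
  clear_value e
  have hestep : ∀ n : ℕ, e (n+1) = psi * e n := by
    intro n
    have h := grec n
    have hne : lam*gam ≠ 0 := ne_of_gt (by positivity)
    apply mul_left_cancel₀ hne
    simp only [he]
    linear_combination h - (g (n+1)) * hsum' + (g n) * hprod'
  have hepow : ∀ n : ℕ, e n = psi^n * e 0 := by
    intro n
    induction n with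
    | zero => simp
    | succ k ih => rw [hestep k, ih, pow_succ]; ring
  have hM0 : 0 ≤ M := le_trans (abs_nonneg _) (hM 0)
  have hgbd : ∀ n : ℕ, |g n| ≤ M + |Cc| := by
    intro n
    have h1 : |phi^n * Cc| ≤ |Cc| := by
      rw [abs_mul, abs_pow, abs_of_pos hphi0]
      have h2 : phi^n ≤ 1 := pow_le_one₀ hphi0.le hphi1.le
      exact mul_le_of_le_one_left (abs_nonneg Cc) h2
    have h2 : |g n| ≤ |f n| + |phi^n * Cc| := by
      simp only [hg]; exact abs_sub _ _
    have := hM n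
    linarith
  have hebd : ∀ n : ℕ, |e n| ≤ 2*(M + |Cc|) := by
    intro n
    have h1 : |phi * g n| ≤ M + |Cc| := by
      rw [abs_mul, abs_of_pos hphi0]
      calc phi * |g n| ≤ 1 * |g n| := mul_le_mul_of_nonneg_right hphi1.le (abs_nonneg _)
        _ = |g n| := one_mul _
        _ ≤ M + |Cc| := hgbd n
    have h2 : |e n| ≤ |g (n+1)| + |phi * g n| := by
      simp only [he]; exact abs_sub _ _
    have h3 := hgbd (n+1)
    linarith
  have he0 : e 0 = 0 := by
    by_contra h0
    have habs : 0 < |e 0| := abs_pos.mpr h0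
    obtain ⟨n, hn⟩ := pow_unbounded_of_one_lt ((2*(M+|Cc|))/|e 0|) hpsi1
    rw [div_lt_iff₀ habs] at hn
    have h2 := hebd n
    rw [hepow n, abs_mul, abs_pow, abs_of_pos (lt_trans one_pos hpsi1)] at h2
    linarith
  have hgzero : ∀ n : ℕ, g n = 0 := by
    intro n
    induction n with
    | zero => exact hg0
    | succ k ih =>
      have h3 : e k = 0 := by rw [hepow k, he0, mul_zero]
      simp only [he] at h3
      rw [ih] at h3
      linarith
  intro h
  have h4 := hgzero h
  simp only [hg] at h4
  linarith
end

section
/- Let λ_o ∈ (0, 1/2), μ_o = 1 - λ_o, λ_i ∈ [λ_o, 1], μ_i = 1 - λ_i, γ ∈ (0, 1), 0 ≤ C_i ≤ C_c, and φ = (1 - √(1 - 4λ_o μ_o γ²)) / (2λ_o γ). If γ(λ_i - λ_o)(1 - φ²) ≤ C_i / C_c (with C_c > 0), then the function V(h) = φ^h · C_c satisfies the Bellman optimality equation with the ordinary action attaining the minimum at every state: V(0) = C_c, and for every h ≥ 1, γ(λ_o V(h+1) + μ_o V(h-1)) = V(h) and V(h) ≤ C_i + γ(λ_i V(h+1) +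 μ_i V(h-1)). In particular V(h) = min( γ(λ_o V(h+1) + μ_o V(h-1)), C_i + γ(λ_i V(h+1) + μ_i V(h-1)) ) for all h ≥ 1. -/
/-- If `gam*(li - lo)*(1 - phi^2) ≤ Ci/Cc` (with `Cc > 0`), then
`V h = phi^h * Cc` satisfies the Bellman optimality equation, with the ordinary
action attaining the minimum at every state. -/
theorem stmt_6 (lo mo li mi gam Ci Cc phi : ℝ)
    (hlo0 : 0 < lo) (hlo : lo < 1/2) (hmo : mo = 1 - lo)
    (hli : li ∈ Set.Icc lo 1) (hmi : mi = 1 - li)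
    (hgam0 : 0 < gam) (hgam1 : gam < 1)
    (hCi0 : 0 ≤ Ci) (hCiCc : Ci ≤ Cc) (hCc : 0 < Cc)
    (hphi : phi = (1 - Real.sqrt (1 - 4*lo*mo*gam^2)) / (2*lo*gam))
    (hcond : gam * (li - lo) * (1 - phi ^ 2) ≤ Ci / Cc)
    (V : ℕ → ℝ) (hV : ∀ h : ℕ, V h = phi ^ h * Cc) :
    V 0 = Cc ∧
    (∀ h : ℕ, 1 ≤ h →
      gam * (lo * V (h+1) + mo * V (h-1)) = V h ∧
      V h ≤ Ci + gam * (li * V (h+1) + mi * V (h-1))) ∧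
    (∀ h : ℕ, 1 ≤ h →
      V h = min (gam * (lo * V (h+1) + mo * V (h-1)))
                (Ci + gam * (li * V (h+1) + mi * V (h-1)))) := by
  obtain ⟨hli1, hli2⟩ := hli
  subst hmo hmi
  set s := Real.sqrt (1 - 4*lo*(1-lo)*gam^2) with hsdef
  have hD : 0 < 1 - 4*lo*(1-lo)*gam^2 := by nlinarith [sq_nonneg (1-2*lo), sq_nonneg gam, sq_nonneg ((1-2*lo)*gam)]
  have hs2 : s^2 = 1 - 4*lo*(1-lo)*gam^2 := Real.sq_sqrt hD.le
  have hspos : 0 < s := Real.sqrt_pos.mpr hD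
  have h1lo : (0:ℝ) < 1 - lo := by linarith
  have hs1 : s < 1 := by
    nlinarith [hs2, mul_pos (mul_pos hlo0 h1lo) (pow_pos hgam0 2)]
  have hden : (0:ℝ) < 2*lo*gam := by positivity
  have hphipos : 0 < phi := by
    rw [hphi]
    exact div_pos (by linarith) hden
  have hphieq : phi * (2*lo*gam) = 1 - s := by
    rw [hphi]; field_simp
  have hkey : gam * (lo * phi^2 + (1-lo)) = phi := by
    have h4 : (0:ℝ) < 4*lo*gam := by positivity
    have := hphieq
    nlinarith [hs2, hphieq, sq_nonneg (phi*(2*lo*gam) - (1-s))]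
  have hphilt1 : phi < 1 := by
    have hsgt : 1 - 2*lo*gam < s := by
      nlinarith [hs2, hspos, mul_pos hlo0 (mul_pos hgam0 (sub_pos.mpr hgam1))]
    rw [hphi]
    rw [div_lt_one hden]
    linarith
  have hphi2 : phi^2 < 1 := by nlinarith
  have hcond2 : gam * (li - lo) * (1 - phi^2) * Cc ≤ Ci := (le_div_iff₀ hCc).mp hcond
  have hA : 0 ≤ gam * (li - lo) * (1 - phi^2) * Cc := by
    have : 0 ≤ li - lo := by linarith
    have : 0 ≤ 1 - phi^2 := by linarith
    positivity
  have main : ∀ h : ℕ, 1 ≤ h →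
      gam * (lo * V (h+1) + (1-lo) * V (h-1)) = V h ∧
      V h ≤ Ci + gam * (li * V (h+1) + (1-li) * V (h-1)) := by
    intro h hh
    obtain ⟨k, rfl⟩ := Nat.exists_eq_add_of_le hh
    have e0 : (1 + k) - 1 = k := by omega
    have e1 : (1 + k) + 1 = k + 2 := by omega
    rw [e0, e1, hV, hV, hV]
    have hp1 : phi^k ≤ 1 := pow_le_one₀ hphipos.le hphilt1.le
    have hp0 : 0 ≤ phi^k := by positivity
    constructor
    · have : gam * (lo * phi^2 + (1-lo)) * (phi^k * Cc) = phi * (phi^k * Cc) := by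
        rw [hkey]
      calc gam * (lo * (phi^(k+2)*Cc) + (1-lo) * (phi^k*Cc))
          = gam * (lo * phi^2 + (1-lo)) * (phi^k * Cc) := by ring
        _ = phi * (phi^k * Cc) := by rw [hkey]
        _ = phi^(1+k) * Cc := by ring
    · have h1 : gam * (li - lo) * (1 - phi^2) * Cc * phi^k ≤ gam * (li - lo) * (1 - phi^2) * Cc :=
        mul_le_of_le_one_right hA hp1
      have h3 : gam * (li - lo) * (1 - phi^2) * Cc * phi^k ≤ Ci := le_trans h1 hcond2
      have key2 : gam * (lo * phi^2 + (1-lo)) * (phi^k * Cc) = phi * (phi^k * Cc) := by rw [hkey]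
      have e2 : phi^(k+2) = phi^k * phi^2 := by ring
      have e3 : phi^(1+k) = phi^k * phi := by ring
      rw [e2, e3]
      linarith [h3, key2]
  refine ⟨by rw [hV]; simp, main, ?_⟩
  intro h hh
  obtain ⟨heq, hle⟩ := main h hh
  rw [min_eq_left (by linarith), heq]
end

section
/- Let λ_o ∈ (0, 1/2), μ_o = 1 - λ_o, λ_i ∈ [λ_o, 1], μ_i = 1 - λ_i, γ ∈ (0, 1), 0 ≤ C_i ≤ C_c with C_c > 0, and φ = (1 - √(1 - 4λ_o μ_o γ²)) / (2λ_o γ). If γ(λ_i - λ_o)(1 - φ²) > C_i / C_c, then at health state h = 1 the intensive action strictly improves on the always-ordinary value function V_o(h) = φ^h C_c; that is, C_i + γ(λ_i V_o(2) + μ_i V_o(0)) < γ(λ_o V_o(2) + μ_o V_o(0)) = V_o(1). Consequently the always-ordinary policy is not optimal. -/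
/-!
The closed form for `φ` is the smaller root of `γ λ_o x² - x + γ μ_o = 0`, which is exactly the
Bellman equation `V_o(1) = γ (λ_o V_o(2) + μ_o V_o(0))` for `V_o(h) = φ^h C_c`. Against this
value, switching to intensive monitoring at `h = 1` moves probability `λ_i - λ_o` from the
critical state to state `2`, saving `γ (λ_i - λ_o)(1 - φ²) C_c`, which exceeds its cost `C_i`.
-/

theorem mul_sq_add_eq_self_of_eq_root {a c x : ℝ} (ha : a ≠ 0) (hdisc : 4 * a * c ≤ 1)
    (hx : x = (1 - √(1 - 4 * a * c)) / (2 * a)) : a * x ^ 2 + c = x := by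
  have hs : discrim a (-1) c = √(1 - 4 * a * c) * √(1 - 4 * a * c) := by
    rw [discrim, Real.mul_self_sqrt (by linarith)]
    ring
  have hroot := (quadratic_eq_zero_iff ha hs x).2 (Or.inr (by rw [hx]; ring))
  linear_combination hroot

theorem intensive_step_lt_ordinary_step {lo li gam Ci Cc phi : ℝ} (hCc : 0 < Cc)
    (hcond : Ci / Cc < gam * (li - lo) * (1 - phi ^ 2)) :
    Ci + gam * (li * (phi ^ 2 * Cc) + (1 - li) * Cc) <
      gam * (lo * (phi ^ 2 * Cc) + (1 - lo) * Cc) := by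
  rw [div_lt_iff₀ hCc] at hcond
  linear_combination hcond

theorem stmt_7_general (lo mo li mi gam Ci Cc phi : ℝ)
    (hlo0 : 0 < lo) (hmo : mo = 1 - lo)
    (hmi : mi = 1 - li)
    (hgam0 : 0 < gam) (hgam1 : gam < 1)
    (hCc : 0 < Cc)
    (hphi : phi = (1 - Real.sqrt (1 - 4*lo*mo*gam^2)) / (2*lo*gam))
    (hcond : Ci / Cc < gam * (li - lo) * (1 - phi ^ 2))
    (Vo : ℕ → ℝ) (hVo : ∀ h : ℕ, Vo h = phi ^ h * Cc) :
    Ci + gam * (li * Vo 2 + mi * Vo 0) < gam * (lo * Vo 2 + mo * Vo 0) ∧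
    gam * (lo * Vo 2 + mo * Vo 0) = Vo 1 := by
  subst hmo hmi
  have hdisc : 4 * (gam * lo) * (gam * (1 - lo)) ≤ 1 := by
    nlinarith [sq_nonneg (1 - 2 * lo), mul_pos hgam0 hgam0]
  have hroot : gam * lo * phi ^ 2 + gam * (1 - lo) = phi :=
    mul_sq_add_eq_self_of_eq_root (by positivity) hdisc (by rw [hphi]; ring_nf)
  rw [hVo 0, hVo 1, hVo 2, pow_zero, one_mul, pow_one]
  exact ⟨intensive_step_lt_ordinary_step hCc hcond, by linear_combination Cc * hroot⟩

/-- If `gam*(li - lo)*(1 - phi^2) > Ci/Cc`, then at health state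
`h = 1` the intensive action strictly improves on the always-ordinary value
function `V_o h = phi^h * Cc`. -/
theorem stmt_7 (lo mo li mi gam Ci Cc phi : ℝ)
    (hlo0 : 0 < lo) (hlo : lo < 1/2) (hmo : mo = 1 - lo)
    (hli : li ∈ Set.Icc lo 1) (hmi : mi = 1 - li)
    (hgam0 : 0 < gam) (hgam1 : gam < 1)
    (hCi0 : 0 ≤ Ci) (hCiCc : Ci ≤ Cc) (hCc : 0 < Cc)
    (hphi : phi = (1 - Real.sqrt (1 - 4*lo*mo*gam^2)) / (2*lo*gam))
    (hcond : Ci / Cc < gam * (li - lo) * (1 - phi ^ 2))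
    (Vo : ℕ → ℝ) (hVo : ∀ h : ℕ, Vo h = phi ^ h * Cc) :
    Ci + gam * (li * Vo 2 + mi * Vo 0) < gam * (lo * Vo 2 + mo * Vo 0) ∧
    gam * (lo * Vo 2 + mo * Vo 0) = Vo 1 :=
  stmt_7_general lo mo li mi gam Ci Cc phi hlo0 hmo hmi hgam0 hgam1 hCc hphi hcond Vo hVo
end

section
/- Let λ_o ∈ (0, 1/2), μ_o = 1 - λ_o, λ_i ∈ [0, 1], μ_i = 1 - λ_i, γ ∈ (0, 1), 0 ≤ C_i ≤ C_c, and φ = (1 - √(1 - 4λ_o μ_o γ²)) / (2λ_o γ). If V : ℕ → ℝ is bounded, nonnegative, satisfies V(0) = C_c and V(h) = min( γ(λ_o V(h+1) + μ_o V(h-1)), C_i + γ(λ_i V(h+1) + μ_i V(h-1)) ) for all h ≥ 1, then V(h) ≤ φ^h · C_c for all h ∈ ℕ. -/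
/-- The bounded nonnegative solution of the Bellman optimality
equation is dominated by the value `phi^h * Cc` of the always-ordinary policy. -/
theorem stmt_10 (lo mo li mi gam Ci Cc phi : ℝ)
    (hlo0 : 0 < lo) (hlo : lo < 1/2) (hmo : mo = 1 - lo)
    (hli : li ∈ Set.Icc (0:ℝ) 1) (hmi : mi = 1 - li)
    (hgam0 : 0 < gam) (hgam1 : gam < 1)
    (hCi0 : 0 ≤ Ci) (hCiCc : Ci ≤ Cc)
    (hphi : phi = (1 - Real.sqrt (1 - 4*lo*mo*gam^2)) / (2*lo*gam))
    (V : ℕ → ℝ) (hbdd : ∃ M : ℝ, ∀ h : ℕ, |V h| ≤ M)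
    (hpos : ∀ h : ℕ, 0 ≤ V h)
    (hV0 : V 0 = Cc)
    (hbell : ∀ h : ℕ, 1 ≤ h →
      V h = min (gam * (lo * V (h+1) + mo * V (h-1)))
                (Ci + gam * (li * V (h+1) + mi * V (h-1)))) :
    ∀ h : ℕ, V h ≤ phi ^ h * Cc := by
  have hCc0 : 0 ≤ Cc := le_trans hCi0 hCiCc
  have hmo0 : 0 < mo := by rw [hmo]; linarith
  have ha0 : 0 < 4*lo*mo*gam^2 := by positivity
  have ha1 : 4*lo*mo*gam^2 < 1 := by
    have h1 : 4*lo*mo ≤ 1 := by rw [hmo]; nlinarith [sq_nonneg (1-2*lo)]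
    have h2 : gam^2 < 1 := by nlinarith
    nlinarith [sq_nonneg gam]
  set s := Real.sqrt (1 - 4*lo*mo*gam^2) with hsdef
  have hs : s ^ 2 = 1 - 4*lo*mo*gam^2 := Real.sq_sqrt (by linarith)
  have hs0 : 0 < s := Real.sqrt_pos.mpr (by linarith)
  have hs1 : s < 1 := by
    have : s^2 < 1 := by rw [hs]; linarith
    nlinarith
  have hd0 : 0 < 2*lo*gam := by positivity
  have hphi0 : 0 < phi := by
    rw [hphi]
    exact div_pos (by linarith) hd0
  have hroot : lo*gam*phi^2 + mo*gam = phi := by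
    have : phi * (2*lo*gam) = 1 - s := by
      rw [hphi]; field_simp
    nlinarith [this, hs]
  have h2lg : 2*lo*gam < 1 := by nlinarith
  have hphi1 : phi < 1 := by
    have hsgt : 1 - 2*lo*gam < s := by
      have : (1 - 2*lo*gam)^2 < s^2 := by rw [hs, hmo]; nlinarith
      nlinarith
    rw [hphi, div_lt_one hd0]; linarith
  obtain ⟨M, hM⟩ := hbdd
  set D : ℕ → ℝ := fun h => V h - phi^h * Cc with hD
  have hWnn : ∀ h : ℕ, 0 ≤ phi^h * Cc := fun h => by positivity
  have hub : BddAbove (Set.range D) := by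
    refine ⟨M, ?_⟩
    rintro x ⟨h, rfl⟩
    have h1 := hM h
    have h2 := hWnn h
    have := abs_le.mp h1
    simp only [hD]; linarith [this.2]
  set S := sSup (Set.range D) with hS
  have hDle : ∀ h, D h ≤ S := fun h => le_csSup hub ⟨h, rfl⟩
  have hD0 : D 0 = 0 := by simp [hD, hV0]
  have hS0 : 0 ≤ S := by have := hDle 0; rw [hD0] at this; exact this
  have key : ∀ h, D h ≤ gam * S := by
    intro h
    cases h with
    | zero => rw [hD0]; positivity
    | succ k =>
      have hb := hbell (k+1) (by omega)
      simp only [Nat.add_sub_cancel] at hb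
      have hA : V (k+1) ≤ gam * (lo * V (k+2) + mo * V k) := by
        rw [hb]; exact min_le_left _ _
      have hB := hDle (k+2)
      have hC := hDle k
      simp only [hD] at hB hC ⊢
      have hB' : gam * lo * (V (k+2) - phi^(k+2) * Cc) ≤ gam * lo * S :=
        mul_le_mul_of_nonneg_left hB (by positivity)
      have hC' : gam * mo * (V k - phi^k * Cc) ≤ gam * mo * S :=
        mul_le_mul_of_nonneg_left hC (by positivity)
      have hrt : phi^k * Cc * (lo*gam*phi^2 + mo*gam) = phi^k * Cc * phi := by
        rw [hroot]
      have e1 : phi^(k+1) = phi^k * phi := pow_succ _ _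
      have e2 : phi^(k+2) = phi^k * phi^2 := by ring
      rw [e1]
      rw [e2] at hB'
      have hmo1 : gam * lo * S + gam * mo * S = gam * S := by rw [hmo]; ring
      ring_nf at hA hB' hC' hrt hmo1 ⊢
      linarith
  have hSle : S ≤ gam * S :=
    csSup_le ⟨D 0, ⟨0, rfl⟩⟩ (by rintro x ⟨h, rfl⟩; exact key h)
  have hSneg : S ≤ 0 := by
    by_contra hc
    push_neg at hc
    have h1 : gam * S < 1 * S := mul_lt_mul_of_pos_right hgam1 hc
    rw [one_mul] at h1
    linarith
  intro h
  have := hDle h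
  simp only [hD] at this
  linarith
end

section
/- Let λ_o ∈ (0, 1/2), μ_o = 1 - λ_o, λ_i ∈ [0, 1], μ_i = 1 - λ_i, γ ∈ (0, 1), and 0 < C_i ≤ C_c. If V : ℕ → ℝ is bounded, nonnegative, satisfies V(0) = C_c and the Bellman optimality equation V(h) = min( γ(λ_o V(h+1) + μ_o V(h-1)), C_i + γ(λ_i V(h+1) + μ_i V(h-1)) ) for all h ≥ 1, then there exists h' ∈ ℕ such that for all h ≥ h', the ordinary action is strictly better: γ(λ_o V(h+1) + μ_o V(h-1)) < C_i + γ(λ_i V(h+1) + μ_i V(h-1)). -/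
/-- Lemma 1(b): For the optimal value function of the simplified
RPM service with `0 < Ci ≤ Cc`, there exists `h'` such that for all `h ≥ h'`
the ordinary action is strictly better than the intensive one. -/
theorem stmt_11 (lo mo li mi gam Ci Cc : ℝ)
    (hlo0 : 0 < lo) (hlo : lo < 1/2) (hmo : mo = 1 - lo)
    (hli : li ∈ Set.Icc (0:ℝ) 1) (hmi : mi = 1 - li)
    (hgam0 : 0 < gam) (hgam1 : gam < 1)
    (hCi0 : 0 < Ci) (hCiCc : Ci ≤ Cc)
    (V : ℕ → ℝ) (hbdd : ∃ M : ℝ, ∀ h : ℕ, |V h| ≤ M)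
    (hpos : ∀ h : ℕ, 0 ≤ V h)
    (hV0 : V 0 = Cc)
    (hbell : ∀ h : ℕ, 1 ≤ h →
      V h = min (gam * (lo * V (h+1) + mo * V (h-1)))
                (Ci + gam * (li * V (h+1) + mi * V (h-1)))) :
    ∃ h' : ℕ, ∀ h : ℕ, h' ≤ h →
      gam * (lo * V (h+1) + mo * V (h-1))
        < Ci + gam * (li * V (h+1) + mi * V (h-1)) := by
  obtain ⟨M, hM⟩ := hbdd
  have hM0 : 0 ≤ M := le_trans (abs_nonneg _) (hM 0)
  -- geometric decay: V h ≤ γ^k M whenever k ≤ h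
  have decay : ∀ k : ℕ, ∀ h : ℕ, k ≤ h → V h ≤ gam ^ k * M := by
    intro k
    induction k with
    | zero => intro h _; simpa using le_trans (le_abs_self _) (hM h)
    | succ k ih =>
      intro h hk
      have h1 : 1 ≤ h := le_trans (Nat.succ_le_succ (Nat.zero_le k)) hk
      have hmin := hbell h h1
      have hle : V h ≤ gam * (lo * V (h+1) + mo * V (h-1)) := by
        rw [hmin]; exact min_le_left _ _
      have hp : V (h+1) ≤ gam ^ k * M := ih (h+1) (by omega)
      have hq : V (h-1) ≤ gam ^ k * M := ih (h-1) (by omega)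
      have hmo0 : 0 < mo := by rw [hmo]; linarith
      calc V h ≤ gam * (lo * V (h+1) + mo * V (h-1)) := hle
        _ ≤ gam * (lo * (gam ^ k * M) + mo * (gam ^ k * M)) := by
            apply mul_le_mul_of_nonneg_left _ (le_of_lt hgam0)
            exact add_le_add (mul_le_mul_of_nonneg_left hp (le_of_lt hlo0))
              (mul_le_mul_of_nonneg_left hq (le_of_lt hmo0))
        _ = gam ^ (k+1) * M := by rw [hmo]; ring
  obtain ⟨n, hn⟩ : ∃ n : ℕ, gam ^ n < Ci / (2 * M + 1) :=
    exists_pow_lt_of_lt_one (by positivity) hgam1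
  have hBn : gam ^ n * (2 * M + 1) < Ci := by
    rw [← lt_div_iff₀ (by positivity)]; exact hn
  refine ⟨n + 1, fun h hh => ?_⟩
  have hp : V (h+1) ≤ gam ^ n * M := by
    have : V (h+1) ≤ gam ^ (h+1) * M := decay (h+1) (h+1) le_rfl
    refine this.trans (mul_le_mul_of_nonneg_right ?_ hM0)
    exact pow_le_pow_of_le_one (le_of_lt hgam0) (le_of_lt hgam1) (by omega)
  have hq : V (h-1) ≤ gam ^ n * M := by
    have : V (h-1) ≤ gam ^ (h-1) * M := decay (h-1) (h-1) le_rfl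
    refine this.trans (mul_le_mul_of_nonneg_right ?_ hM0)
    exact pow_le_pow_of_le_one (le_of_lt hgam0) (le_of_lt hgam1) (by omega)
  have hVp := hpos (h+1)
  have hVq := hpos (h-1)
  have hli0 := hli.1
  have hli1 := hli.2
  have hgn : 0 < gam ^ n := pow_pos hgam0 n
  rw [hmo, hmi]
  nlinarith [mul_pos hgam0 hgn, mul_nonneg hVp hVq,
    mul_le_mul_of_nonneg_left hp (le_of_lt hgam0),
    mul_le_mul_of_nonneg_left hq (le_of_lt hgam0),
    mul_nonneg hli0 hVp, mul_nonneg hli0 hVq,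
    mul_nonneg (mul_nonneg (le_of_lt hgam0) hli0) hVp,
    mul_nonneg (mul_nonneg (le_of_lt hgam0) hli0) hVq]
end

section
/- Let λ ∈ (0, 1/2], μ = 1 - λ, γ ∈ (0, 1) with γμ(1 + γμ) ≤ 1 - γ²λμ, and let V : ℕ → ℝ be nonnegative and satisfy V(h) ≤ γ(λ V(h+1) + μ V(h-1)) for every h ≥ 1. Then for every h ≥ 1, V(h) + V(h+1) ≤ V(h-1) + V(h+2). -/
/-- Under condition (b) `gam*mu*(1 + gam*mu) ≤ 1 - gam²*lam*mu`,
a nonnegative function satisfying `V h ≤ gam*(lam*V(h+1) + mu*V(h-1))` for all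
`h ≥ 1` is "discretely convex": `V h + V (h+1) ≤ V (h-1) + V (h+2)`. -/
theorem stmt_15 (lam mu gam : ℝ)
    (hlam0 : 0 < lam) (hlam : lam ≤ 1/2) (hmu : mu = 1 - lam)
    (hgam0 : 0 < gam) (hgam1 : gam < 1)
    (hcond : gam * mu * (1 + gam * mu) ≤ 1 - gam^2 * lam * mu)
    (V : ℕ → ℝ) (hpos : ∀ h : ℕ, 0 ≤ V h)
    (hineq : ∀ h : ℕ, 1 ≤ h → V h ≤ gam * (lam * V (h+1) + mu * V (h-1))) :
    ∀ h : ℕ, 1 ≤ h → V h + V (h+1) ≤ V (h-1) + V (h+2) := by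
  intro h hh
  have hmu2 : (1:ℝ)/2 ≤ mu := by rw [hmu]; linarith
  have H1 := hineq h hh
  have H2 := hineq (h+1) (by omega)
  simp only [Nat.add_sub_cancel] at H2
  set a := V (h-1) with ha
  set b := V h with hb
  set c := V (h+1) with hc
  set d := V (h+2) with hd
  have ha0 : 0 ≤ a := hpos _
  have hb0 : 0 ≤ b := hpos _
  have hc0 : 0 ≤ c := hpos _
  have hd0 : 0 ≤ d := hpos _
  -- positivity of 1 - gam^2*lam*mu
  have hgm : 0 < gam * mu := mul_pos hgam0 (by linarith)
  have hpos1 : 0 < 1 - gam^2 * lam * mu := by nlinarith [mul_pos hgm hgm]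
  -- key combined inequality
  have key : (1 - gam^2 * lam * mu) * (b + c) ≤
      gam * mu * (1 + gam * mu) * a + gam * lam * (1 + gam * lam) * d := by
    nlinarith [mul_le_mul_of_nonneg_left H2 (le_of_lt (mul_pos hgam0 hlam0)),
      mul_le_mul_of_nonneg_left H1 (mul_nonneg hgam0.le (by linarith : (0:ℝ) ≤ mu))]
  -- γλ(1+γλ) ≤ γμ(1+γμ) ≤ 1 - γ²λμ
  have hlm : gam * lam * (1 + gam * lam) ≤ gam * mu * (1 + gam * mu) := by
    have h0 : 0 ≤ gam * (mu - lam) * (1 + gam * (mu + lam)) := by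
      apply mul_nonneg (mul_nonneg hgam0.le (by linarith)); nlinarith
    nlinarith [h0]
  have final : (1 - gam^2 * lam * mu) * (b + c) ≤ (1 - gam^2 * lam * mu) * (a + d) := by
    calc (1 - gam^2 * lam * mu) * (b + c)
        ≤ gam * mu * (1 + gam * mu) * a + gam * lam * (1 + gam * lam) * d := key
      _ ≤ (1 - gam^2 * lam * mu) * a + (1 - gam^2 * lam * mu) * d := by
          have h1 : gam * lam * (1 + gam * lam) ≤ 1 - gam^2 * lam * mu := le_trans hlm hcond
          nlinarith
      _ = (1 - gam^2 * lam * mu) * (a + d) := by ring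
  exact le_of_mul_le_mul_left (by linarith [final]) hpos1
end

section
/- Let λ_o ∈ (0, 1/2), μ_o = 1 - λ_o, λ_i ∈ [λ_o, 1], μ_i = 1 - λ_i, γ ∈ (0, 1), 0 < C_i ≤ C_c, and φ = (1 - √(1 - 4λ_o μ_o γ²)) / (2λ_o γ). Suppose (a) γ(λ_i - λ_o)(1 - φ²) > C_i / C_c and (b) γμ_o(1 + γμ_o) ≤ 1 - γ²λ_o μ_o. Let V : ℕ → ℝ be bounded, nonnegative, with V(0) = C_c and V(h) = min( γ(λ_o V(h+1) + μ_o V(h-1)), C_i + γ(λ_i V(h+1) + μ_i V(h-1)) ) for all h ≥ 1. Then there exists a threshold h̄ ≥ 1 such that for every h with 1 ≤ h ≤ h̄, C_i + γ(λ_i V(h+1) + μ_i V(h-1)) ≤ γ(λ_o V(h+1) + μ_o V(h-1)), and for every h > h̄, γ(λ_o V(h+1) + μ_o V(h-1)) < C_i + γ(λ_i V(h+1) + μ_i V(h-1)). -/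
/-!
The smaller root `φ` of `λ_o γ x² - x + γ μ_o = 0` makes `h ↦ φ^h C_c` an exact solution of
the ordinary-monitoring recursion, and since `V` is a bounded subsolution of that recursion, a
discounted maximum principle gives `V h ≤ φ^h C_c`.

Intensive monitoring is preferred at state `h` exactly when the gain
`γ (λ_i - λ_o) (V (h-1) - V (h+1))` covers `C_i`. At `h = 1` the bound `V 2 ≤ φ² C_c` and (a)
make the gain exceed `C_i`. Where ordinary monitoring is strictly preferred, `V h` is the
ordinary average, and together with `V (h+1) ≤` its ordinary average and (b) this shows that
the gain stays below `C_i` at `h + 1`. Finally the gain cannot stay above `C_i > 0` forever,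
because `V ≥ 0` would then telescope to `-∞`. The threshold is the last state before the gain
first drops.
-/

theorem eq_mul_sq_add_of_eq_smaller_root {a c x : ℝ} (ha : 0 < a) (hd : 0 ≤ 1 - 4 * a * c)
    (hx : x = (1 - √(1 - 4 * a * c)) / (2 * a)) : x = a * x ^ 2 + c := by
  have hs := Real.sq_sqrt hd
  subst hx
  field_simp
  linear_combination -hs

theorem smaller_root_nonneg {a c : ℝ} (ha : 0 < a) (hc : 0 ≤ c) :
    0 ≤ (1 - √(1 - 4 * a * c)) / (2 * a) := by
  have : √(1 - 4 * a * c) ≤ 1 := Real.sqrt_le_one.mpr (by nlinarith)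
  exact div_nonneg (by linarith) (by positivity)

theorem phi_nonneg_and_eq {lo gam phi : ℝ} (hlo0 : 0 < lo) (hlo1 : lo ≤ 1)
    (hgam0 : 0 < gam) (hgam1 : gam ≤ 1)
    (hphi : phi = (1 - √(1 - 4 * lo * (1 - lo) * gam ^ 2)) / (2 * lo * gam)) :
    0 ≤ phi ∧ phi = gam * (lo * phi ^ 2 + (1 - lo)) := by
  have hac : 4 * lo * (1 - lo) * gam ^ 2 = 4 * (lo * gam) * (gam * (1 - lo)) := by ring
  rw [hac, show 2 * lo * gam = 2 * (lo * gam) by ring] at hphi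
  have hd : 0 ≤ 1 - 4 * (lo * gam) * (gam * (1 - lo)) := by
    nlinarith [sq_nonneg (gam * (1 - 2 * lo)), mul_le_one₀ hgam1 hgam0.le hgam1]
  refine ⟨hphi ▸ smaller_root_nonneg (by positivity) (by nlinarith), ?_⟩
  linear_combination eq_mul_sq_add_of_eq_smaller_root (by positivity) hd hphi

theorem nonpos_of_le_discounted_average {d : ℕ → ℝ} {q a b : ℝ} (hq : 0 ≤ q) (ha : 0 ≤ a)
    (hb : 0 ≤ b) (hqab : q * (a + b) < 1) (hd : BddAbove (Set.range d)) (h0 : d 0 ≤ 0)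
    (hsub : ∀ n, d (n + 1) ≤ q * (a * d (n + 2) + b * d n)) (n : ℕ) : d n ≤ 0 := by
  set t := max (⨆ n, d n) 0
  have hdt : ∀ n, d n ≤ t := fun n => (le_ciSup hd n).trans (le_max_left _ _)
  have ht0 : 0 ≤ t := le_max_right _ _
  have hle : ∀ n, d n ≤ q * (a + b) * t := by
    rintro (_ | n)
    · exact h0.trans (by positivity)
    · calc d (n + 1) ≤ q * (a * d (n + 2) + b * d n) := hsub n
        _ ≤ q * (a * t + b * t) := by gcongr <;> exact hdt _
        _ = q * (a + b) * t := by ring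
  have ht : t ≤ q * (a + b) * t := max_le (ciSup_le hle) (by positivity)
  have : t ≤ 0 := by nlinarith
  exact (hdt n).trans this

theorem exists_sub_lt_of_nonneg {u : ℕ → ℝ} (hu : ∀ n, 0 ≤ u n) {c : ℝ} (hc : 0 < c) :
    ∃ j, u j - u (j + 2) < c := by
  by_contra! h
  have hdesc : ∀ n : ℕ, u (2 * n) + n * c ≤ u 0 := by
    intro n
    induction n with
    | zero => simp
    | succ n ih =>
      have := h (2 * n)
      push_cast
      rw [show 2 * (n + 1) = 2 * n + 2 by ring]
      linarith
  obtain ⟨n, hn⟩ := exists_nat_gt (u 0 / c)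
  have := hdesc n
  have := hu (2 * n)
  rw [div_lt_iff₀ hc] at hn
  linarith

theorem exists_threshold {P : ℕ → Prop} (hstep : ∀ n, P n → P (n + 1)) (h0 : ¬P 0)
    (hex : ∃ n, P n) : ∃ N, 1 ≤ N ∧ (∀ n < N, ¬P n) ∧ ∀ n, N ≤ n → P n := by
  classical
  refine ⟨Nat.find hex, Nat.pos_of_ne_zero fun h => h0 (h ▸ Nat.find_spec hex),
    fun n => Nat.find_min hex, fun n hn => ?_⟩
  induction n, hn using Nat.le_induction with
  | base => exact Nat.find_spec hex
  | succ n _ ih => exact hstep n ih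

def ordinaryCost (gam lo : ℝ) (V : ℕ → ℝ) (h : ℕ) : ℝ :=
  gam * (lo * V (h + 1) + (1 - lo) * V (h - 1))

def intensiveCost (gam li Ci : ℝ) (V : ℕ → ℝ) (h : ℕ) : ℝ :=
  Ci + gam * (li * V (h + 1) + (1 - li) * V (h - 1))

/-- The saving in discounted continuation cost bought by intensive monitoring at state `j + 1`. -/
def intensiveGain (gam lo li : ℝ) (V : ℕ → ℝ) (j : ℕ) : ℝ :=
  gam * (li - lo) * (V j - V (j + 2))

def SatisfiesBellman (gam lo li Ci : ℝ) (V : ℕ → ℝ) : Prop :=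
  ∀ h, 1 ≤ h → V h = min (ordinaryCost gam lo V h) (intensiveCost gam li Ci V h)

section Monitoring

variable {gam lo li Ci : ℝ} {V : ℕ → ℝ}

theorem ordinaryCost_succ (j : ℕ) :
    ordinaryCost gam lo V (j + 1) = gam * (lo * V (j + 2) + (1 - lo) * V j) := rfl

theorem ordinaryCost_lt_intensiveCost_iff (j : ℕ) :
    ordinaryCost gam lo V (j + 1) < intensiveCost gam li Ci V (j + 1) ↔
      intensiveGain gam lo li V j < Ci := by
  have : ordinaryCost gam lo V (j + 1) - intensiveCost gam li Ci V (j + 1) =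
      intensiveGain gam lo li V j - Ci := by
    rw [ordinaryCost_succ, intensiveCost, intensiveGain]
    simp only [Nat.add_sub_cancel]
    ring
  constructor <;> intro <;> linarith

namespace SatisfiesBellman

variable (hV : SatisfiesBellman gam lo li Ci V)
include hV

theorem le_ordinaryCost (j : ℕ) : V (j + 1) ≤ ordinaryCost gam lo V (j + 1) :=
  (hV _ le_add_self).trans_le (min_le_left _ _)

theorem le_pow_mul {phi Cc : ℝ} (hphi0 : 0 ≤ phi) (hphi : phi = gam * (lo * phi ^ 2 + (1 - lo)))
    (hgam0 : 0 ≤ gam) (hgam1 : gam < 1) (hlo0 : 0 ≤ lo) (hlo1 : lo ≤ 1)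
    (hbdd : BddAbove (Set.range V)) (hV0 : V 0 ≤ Cc) (hCc : 0 ≤ Cc) (h : ℕ) :
    V h ≤ phi ^ h * Cc := by
  obtain ⟨M, hM⟩ := hbdd
  have hd : BddAbove (Set.range fun n => V n - phi ^ n * Cc) :=
    ⟨M, by rintro _ ⟨n, rfl⟩; nlinarith [hM ⟨n, rfl⟩, pow_nonneg hphi0 n]⟩
  refine sub_nonpos.mp (nonpos_of_le_discounted_average hgam0 hlo0 (sub_nonneg.mpr hlo1)
    (by simpa using hgam1) hd (by simpa using hV0) (fun n => ?_) h)
  have hsol : phi ^ (n + 1) * Cc =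
      gam * (lo * (phi ^ (n + 2) * Cc) + (1 - lo) * (phi ^ n * Cc)) := by
    linear_combination (phi ^ n * Cc) * hphi
  have := hV.le_ordinaryCost n
  rw [ordinaryCost_succ] at this
  linarith

theorem intensiveGain_succ_lt (hgam0 : 0 < gam) (hgam1 : gam ≤ 1) (hlo1 : lo < 1)
    (hli : lo ≤ li) (hCi : 0 < Ci) (hb : gam * (1 - lo) ≤ 1 - gam ^ 2 * (1 - lo))
    (hpos : ∀ n, 0 ≤ V n) {j : ℕ} (hj : intensiveGain gam lo li V j < Ci) :
    intensiveGain gam lo li V (j + 1) < Ci := by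
  have hord : V (j + 1) = gam * (lo * V (j + 2) + (1 - lo) * V j) :=
    (hV _ le_add_self).trans (min_eq_left ((ordinaryCost_lt_intensiveCost_iff j).mpr hj).le)
  have hnext := hV.le_ordinaryCost (j + 1)
  rw [ordinaryCost_succ] at hnext
  have hγμ : 0 < gam * (1 - lo) := mul_pos hgam0 (by linarith)
  have hk : 0 < 1 - gam ^ 2 * (1 - lo) := hγμ.trans_le hb
  -- one step of the recursion at `j + 2`, fed into the ordinary average at `j + 1`
  have hdiff : (1 - gam ^ 2 * (1 - lo)) * (V (j + 1) - V (j + 3)) ≤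
      gam * (1 - lo) * (V j - V (j + 2)) := by
    nlinarith [mul_le_mul_of_nonneg_left hnext hgam0.le,
      mul_nonneg (by nlinarith : (0 : ℝ) ≤ 1 - gam ^ 2) (hpos (j + 3))]
  refine lt_of_mul_lt_mul_left ?_ hk.le
  calc (1 - gam ^ 2 * (1 - lo)) * intensiveGain gam lo li V (j + 1)
      ≤ gam * (1 - lo) * intensiveGain gam lo li V j := by
        unfold intensiveGain
        nlinarith [mul_le_mul_of_nonneg_left hdiff
          (mul_nonneg hgam0.le (sub_nonneg.mpr hli))]
    _ < gam * (1 - lo) * Ci := mul_lt_mul_of_pos_left hj hγμ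
    _ ≤ (1 - gam ^ 2 * (1 - lo)) * Ci := mul_le_mul_of_nonneg_right hb hCi.le

end SatisfiesBellman

theorem lt_intensiveGain_zero {phi Cc : ℝ} (hgam0 : 0 ≤ gam) (hli : lo ≤ li) (hCc : 0 < Cc)
    (hV0 : V 0 = Cc) (hV2 : V 2 ≤ phi ^ 2 * Cc)
    (ha : Ci / Cc < gam * (li - lo) * (1 - phi ^ 2)) : Ci < intensiveGain gam lo li V 0 := by
  rw [div_lt_iff₀ hCc] at ha
  have : gam * (li - lo) * ((1 - phi ^ 2) * Cc) ≤ gam * (li - lo) * (V 0 - V 2) := by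
    gcongr
    linarith
  unfold intensiveGain
  linarith

theorem exists_intensiveGain_lt (hgam0 : 0 ≤ gam) (hli : lo ≤ li) (hpos : ∀ n, 0 ≤ V n)
    (hCi : 0 < Ci) : ∃ j, intensiveGain gam lo li V j < Ci := by
  simpa only [intensiveGain, mul_sub] using exists_sub_lt_of_nonneg
    (u := fun n => gam * (li - lo) * V n)
    (fun n => mul_nonneg (mul_nonneg hgam0 (sub_nonneg.mpr hli)) (hpos n)) hCi

end Monitoring

/-- Theorem 2: Under conditions (a) and (b), the optimal policy
for the simplified RPM service is a threshold policy: intensive monitoring is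
(weakly) preferred at all health states `1 ≤ h ≤ h̄` and ordinary monitoring is
strictly preferred at all health states `h > h̄`. -/
theorem stmt_17 (lo mo li mi gam Ci Cc phi : ℝ)
    (hlo0 : 0 < lo) (hlo : lo < 1/2) (hmo : mo = 1 - lo)
    (hli : li ∈ Set.Icc lo 1) (hmi : mi = 1 - li)
    (hgam0 : 0 < gam) (hgam1 : gam < 1)
    (hCi0 : 0 < Ci) (hCiCc : Ci ≤ Cc)
    (hphi : phi = (1 - Real.sqrt (1 - 4*lo*mo*gam^2)) / (2*lo*gam))
    (hconda : Ci / Cc < gam * (li - lo) * (1 - phi ^ 2))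
    (hcondb : gam * mo * (1 + gam * mo) ≤ 1 - gam^2 * lo * mo)
    (V : ℕ → ℝ) (hbdd : ∃ M : ℝ, ∀ h : ℕ, |V h| ≤ M)
    (hpos : ∀ h : ℕ, 0 ≤ V h)
    (hV0 : V 0 = Cc)
    (hbell : ∀ h : ℕ, 1 ≤ h →
      V h = min (gam * (lo * V (h+1) + mo * V (h-1)))
                (Ci + gam * (li * V (h+1) + mi * V (h-1)))) :
    ∃ hbar : ℕ, 1 ≤ hbar ∧
      (∀ h : ℕ, 1 ≤ h → h ≤ hbar →
        Ci + gam * (li * V (h+1) + mi * V (h-1))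
          ≤ gam * (lo * V (h+1) + mo * V (h-1))) ∧
      (∀ h : ℕ, hbar < h →
        gam * (lo * V (h+1) + mo * V (h-1))
          < Ci + gam * (li * V (h+1) + mi * V (h-1))) := by
  subst hmo hmi
  have hV : SatisfiesBellman gam lo li Ci V := hbell
  have hCc : 0 < Cc := hCi0.trans_le hCiCc
  obtain ⟨hphi0, hphi_eq⟩ := phi_nonneg_and_eq hlo0 (by linarith) hgam0 hgam1.le hphi
  have hVle := hV.le_pow_mul hphi0 hphi_eq hgam0.le hgam1 hlo0.le (by linarith)
    (hbdd.imp fun M hM => by rintro _ ⟨n, rfl⟩; exact (le_abs_self _).trans (hM n))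
    hV0.le hCc.le
  obtain ⟨N, hN1, hbelow, habove⟩ :=
    exists_threshold (P := fun j => intensiveGain gam lo li V j < Ci)
    (fun j => hV.intensiveGain_succ_lt hgam0 hgam1.le (by linarith) hli.1 hCi0
      (by linarith) hpos)
    (lt_intensiveGain_zero hgam0.le hli.1 hCc hV0 (hVle 2) hconda).not_gt
    (exists_intensiveGain_lt hgam0.le hli.1 hpos hCi0)
  refine ⟨N, hN1, fun h h1 hN => ?_, fun h hN => ?_⟩
  · obtain ⟨j, rfl⟩ := Nat.exists_eq_add_of_le' h1
    exact not_lt.mp fun hlt =>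
      hbelow j (by omega) ((ordinaryCost_lt_intensiveCost_iff j).mp hlt)
  · obtain ⟨j, rfl⟩ := Nat.exists_eq_add_of_le' (Nat.one_le_of_lt hN)
    exact (ordinaryCost_lt_intensiveCost_iff j).mpr (habove j (by omega))
end
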